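/- arXiv:2305.18749 — 2 statements merged into one kernel-verified Lean document; each statement's English description precedes it below -/
import Mathlib

section
/- Assume B ≠ ∅. Then the weak*-closure of the barrier cone of B equals the weak*-closed convex cone generated by ⋃_{i∈I} dom f_i*, i.e. w*-cl(barr B) = w*-cl cone(⋃_{i∈I} dom f_i*). -/
open Pointwise

noncomputable section

variable {X : Type*} [AddCommGroup X] [Module ℝ X] [TopologicalSpace X]

/-- Fenchel conjugate, as a function on the weak-* dual. -/
def conjFn (h : X → EReal) : WeakDual ℝ X → EReal :=
  fun p => ⨆ x : X, (p x : EReal) - h x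

/-- Epigraph of an extended-real-valued function. -/
def epiFn {V : Type*} (h : V → EReal) : Set (V × ℝ) :=
  {q | h q.1 ≤ (q.2 : EReal)}

/-- Graph of an extended-real-valued function (where it is finite). -/
def gphFn {V : Type*} (h : V → EReal) : Set (V × ℝ) :=
  {q | h q.1 = (q.2 : EReal)}

/-- Effective domain. -/
def domFn {V : Type*} (h : V → EReal) : Set V :=
  {x | h x < ⊤}

open Classical in
/-- Indicator function of a set. -/
def indicatorE {V : Type*} (D : Set V) : V → EReal :=
  fun x => if x ∈ D then (0 : EReal) else ⊤

/-- Convex cone generated by `D ∪ {0}`. -/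
def coneGen {V : Type*} [AddCommGroup V] [Module ℝ V] (D : Set V) : Set V :=
  {0} ∪ {y | ∃ t : ℝ, 0 ≤ t ∧ ∃ x ∈ convexHull ℝ D, y = t • x}

/-- `h ∈ Γ(X)`: proper, convex and lower semicontinuous. -/
def InGamma (h : X → EReal) : Prop :=
  (∀ x, h x ≠ ⊥) ∧ (∃ x, h x ≠ ⊤) ∧
    Convex ℝ {q : X × ℝ | h q.1 ≤ (q.2 : EReal)} ∧ LowerSemicontinuous h

/-- Solution set `A` of the system `σ = {f i x ≤ 0, i ∈ I; x ∈ C}`. -/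
def solSet {I : Type*} (C : Set X) (f : I → X → EReal) : Set X :=
  {x | x ∈ C ∧ ∀ i, f i x ≤ (0 : EReal)}

/-- Characteristic cone `K = cone (epi δ_C* ∪ ⋃ i, epi f_i*)` of the system. -/
def charCone {I : Type*} (C : Set X) (f : I → X → EReal) : Set (WeakDual ℝ X × ℝ) :=
  coneGen (epiFn (conjFn (indicatorE C)) ∪ ⋃ i, epiFn (conjFn (f i)))

/-- Barrier cone `barr C = dom δ_C*`. -/
def barCone (C : Set X) : Set (WeakDual ℝ X) :=
  domFn (conjFn (indicatorE C))

/-- The Farkas–Minkowski constraint qualification. -/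
def IsFM {I : Type*} (C : Set X) (f : I → X → EReal) : Prop :=
  (solSet C f).Nonempty ∧ IsClosed (charCone C f)

/-- Recession function `h^∞ = δ*_{dom h*}`. -/
def recFn (h : X → EReal) : X → EReal :=
  fun x => ⨆ q ∈ domFn (conjFn h), ((q x : ℝ) : EReal)

/-- Recession cone `D^∞ = ⋂_{t>0} t (D - a)`, for any `a ∈ D`. -/
def recCone (D : Set X) : Set X :=
  {d | ∀ a ∈ D, ∀ t : ℝ, 0 < t → d ∈ t • (D - ({a} : Set X))}

/-- Subdifferential of `h` at `a`. -/
def subdiff (h : X → EReal) (a : X) : Set (WeakDual ℝ X) :=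
  {p | (∃ r : ℝ, h a = (r : EReal)) ∧ ∀ x, h a + ((p (x - a) : ℝ) : EReal) ≤ h x}

open Set

/-!
Each `dom f_i*` lies in `barr B`, since `f_i ≤ 0` on `B`, and `barr B` is a convex cone; this gives
`⊇`. Conversely, a `p ∈ barr B` outside the weak*-closed cone generated by the `dom f_i*` is
separated from it by evaluation at some `d ∈ X` with `q d ≤ 0` on every `dom f_i*` and `p d > 0`.
For `f ∈ Γ(X)` the first condition makes `d` a recession direction of every sublevel set of `f`:
otherwise a hyperplane separating a point of the ray from `epi f` yields, after tilting by a point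
of `dom f*` if it is vertical, an element of `dom f*` that is positive at `d`. So `B` contains a
ray `x₀ + ℝ₊ d`, on which `p` is unbounded.
-/

section ConeGen

variable {V : Type*} [AddCommGroup V] [Module ℝ V]

lemma coneGen_eq_hull (D : Set V) : coneGen D = PointedCone.hull ℝ D := by
  have hH : Convex ℝ (convexHull ℝ D) := convex_convexHull ℝ D
  have mem_coneGen {y : V} :
      y ∈ coneGen D ↔ y = 0 ∨ ∃ t : ℝ, 0 ≤ t ∧ y ∈ t • convexHull ℝ D := by
    simp [coneGen, mem_smul_set, eq_comm (a := y)]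
  refine Subset.antisymm ?_ fun y hy => ?_
  · rintro y (rfl | ⟨t, ht, x, hx, rfl⟩)
    · exact zero_mem _
    · exact (PointedCone.hull ℝ D).smul_mem ht
        (convexHull_min PointedCone.subset_hull (PointedCone.hull ℝ D).convex hx)
  induction hy using Submodule.span_induction with
  | mem x hx =>
    exact mem_coneGen.2 (Or.inr ⟨1, zero_le_one, by simpa using subset_convexHull ℝ D hx⟩)
  | zero => exact Or.inl rfl
  | add x y _ _ hx hy =>
    rcases mem_coneGen.1 hx with rfl | ⟨s, hs, hx⟩
    · simpa using hy
    rcases mem_coneGen.1 hy with rfl | ⟨t, ht, hy⟩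
    · simpa using mem_coneGen.2 (Or.inr ⟨s, hs, hx⟩)
    exact mem_coneGen.2 (Or.inr ⟨s + t, add_nonneg hs ht, hH.add_smul hs ht ▸ add_mem_add hx hy⟩)
  | smul c x _ hx =>
    rcases mem_coneGen.1 hx with rfl | ⟨t, ht, hx⟩
    · rw [smul_zero]; exact Or.inl rfl
    refine mem_coneGen.2 (Or.inr ⟨c * t, mul_nonneg c.2 ht, ?_⟩)
    rw [mul_smul]
    exact smul_mem_smul_set hx

end ConeGen

lemma exists_nonneg_pos_add_mul (a : ℝ) {b : ℝ} (hb : 0 < b) : ∃ t : ℝ, 0 ≤ t ∧ 0 < a + t * b :=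
  ⟨(|a| + 1) / b, by positivity, by rw [div_mul_cancel₀ _ hb.ne']; linarith [neg_abs_le a]⟩

lemma isClosed_epiFn {V : Type*} [TopologicalSpace V] {f : V → EReal}
    (hf : LowerSemicontinuous f) : IsClosed (epiFn f) :=
  hf.isClosed_epigraph.preimage
    (continuous_fst.prodMk (continuous_coe_real_ereal.comp continuous_snd))

section Conjugate

lemma mem_domFn_conjFn_iff {f : X → EReal} {q : WeakDual ℝ X} :
    q ∈ domFn (conjFn f) ↔ ∃ M : ℝ, ∀ x (ρ : ℝ), f x ≤ ρ → q x - ρ ≤ M := by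
  constructor
  · intro hq
    refine ⟨(conjFn f q).toReal, fun x ρ hρ => EReal.coe_le_coe_iff.1 ?_⟩
    calc ((q x - ρ : ℝ) : EReal) = q x - ρ := rfl
      _ ≤ q x - f x := EReal.sub_le_sub le_rfl hρ
      _ ≤ conjFn f q := le_iSup (fun x => (q x : EReal) - f x) x
      _ ≤ (conjFn f q).toReal := EReal.le_coe_toReal hq.ne
  · rintro ⟨M, hM⟩
    refine lt_of_le_of_lt (iSup_le fun x => ?_) (EReal.coe_lt_top M)
    induction hfx : f x using EReal.rec with
    | bot =>
      have := hM x (q x - M - 1) (by simp [hfx])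
      linarith
    | coe r => exact EReal.coe_le_coe_iff.2 (hM x r hfx.le)
    | top => simp

lemma mem_barCone_iff {B : Set X} {p : WeakDual ℝ X} :
    p ∈ barCone B ↔ ∃ M : ℝ, ∀ x ∈ B, p x ≤ M := by
  have hind : ∀ x (ρ : ℝ), indicatorE B x ≤ ρ ↔ x ∈ B ∧ 0 ≤ ρ := by
    intro x ρ
    by_cases hx : x ∈ B <;> simp [indicatorE, hx]
  simp only [barCone, mem_domFn_conjFn_iff, hind]
  refine exists_congr fun M => ⟨fun h x hx => by simpa using h x 0 ⟨hx, le_rfl⟩,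
    fun h x ρ hxρ => by linarith [h x hxρ.1, hxρ.2]⟩

variable (X) in
def barrierCone (B : Set X) : PointedCone ℝ (WeakDual ℝ X) where
  carrier := barCone B
  zero_mem' := mem_barCone_iff.2 ⟨0, fun _ _ => le_rfl⟩
  add_mem' {p q} hp hq := by
    obtain ⟨M, hM⟩ := mem_barCone_iff.1 hp
    obtain ⟨N, hN⟩ := mem_barCone_iff.1 hq
    exact mem_barCone_iff.2 ⟨M + N, fun x hx => add_le_add (hM x hx) (hN x hx)⟩
  smul_mem' c {p} hp := by
    obtain ⟨M, hM⟩ := mem_barCone_iff.1 hp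
    exact mem_barCone_iff.2 ⟨c * M, fun x hx => mul_le_mul_of_nonneg_left (hM x hx) c.2⟩

lemma domFn_conjFn_subset_barCone {f : X → EReal} {B : Set X} (hB : ∀ x ∈ B, f x ≤ 0) :
    domFn (conjFn f) ⊆ barCone B := fun q hq => by
  obtain ⟨M, hM⟩ := mem_domFn_conjFn_iff.1 hq
  exact mem_barCone_iff.2 ⟨M, fun x hx => by simpa using hM x 0 (hB x hx)⟩

instance : LocallyConvexSpace ℝ (WeakDual ℝ X) := WeakBilin.locallyConvexSpace

lemma WeakDual.exists_eval_pos_of_notMem (C : ProperCone ℝ (WeakDual ℝ X)) {p : WeakDual ℝ X}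
    (hp : p ∉ C) : ∃ d : X, (∀ q ∈ C, q d ≤ 0) ∧ 0 < p d := by
  obtain ⟨φ, hC, hφp⟩ := C.hyperplane_separation_point hp
  obtain ⟨d, rfl⟩ := LinearMap.dualEmbedding_surjective (topDualPairing ℝ X) φ
  refine ⟨-d, fun q hq => ?_, ?_⟩
  · have : 0 ≤ q d := hC q hq
    simpa using this
  · have : p d < 0 := hφp
    simpa using this

lemma smul_mem_domFn_conjFn_of_separation {f : X → EReal} {g : WeakDual ℝ X} {s u : ℝ}
    (hs : s < 0) (hsep : ∀ x (ρ : ℝ), f x ≤ ρ → g x + ρ * s < u) :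
    (-s)⁻¹ • g ∈ domFn (conjFn f) := by
  refine mem_domFn_conjFn_iff.2 ⟨(-s)⁻¹ * u, fun x ρ hxρ => ?_⟩
  have hinv : 0 < (-s)⁻¹ := inv_pos.2 (neg_pos.2 hs)
  have key : (-s)⁻¹ * (g x + ρ * s) = (-s)⁻¹ * g x - ρ := by field_simp [hs.ne]; ring
  change (-s)⁻¹ * g x - ρ ≤ _
  linarith [mul_lt_mul_of_pos_left (hsep x ρ hxρ) hinv]

variable [IsTopologicalAddGroup X] [ContinuousSMul ℝ X] [LocallyConvexSpace ℝ X]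

lemma exists_separation_epiFn {f : X → EReal} (hconv : Convex ℝ (epiFn f))
    (hlsc : LowerSemicontinuous f) {z : X} {r : ℝ} (hzr : ¬ f z ≤ r) :
    ∃ (g : WeakDual ℝ X) (s u : ℝ),
      (∀ x (ρ : ℝ), f x ≤ ρ → g x + ρ * s < u) ∧ u < g z + r * s := by
  obtain ⟨φ, u, hepi, hzu⟩ :=
    geometric_hahn_banach_closed_point hconv (isClosed_epiFn hlsc) (show (z, r) ∉ epiFn f from hzr)
  have hφ : ∀ x (ρ : ℝ), φ (x, ρ) = φ (x, 0) + ρ * φ (0, 1) := fun x ρ => by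
    rw [← smul_eq_mul, ← map_smul, ← map_add]; simp
  refine ⟨StrongDual.toWeakDual (φ.comp (.inl ℝ X ℝ)), φ (0, 1), u, fun x ρ hxρ => ?_, ?_⟩
  · simpa [hφ x ρ] using hepi (x, ρ) hxρ
  · simpa [hφ z r] using hzu

lemma InGamma.nonempty_domFn_conjFn {f : X → EReal} (hf : InGamma f) :
    (domFn (conjFn f)).Nonempty := by
  obtain ⟨hbot, ⟨x, hx⟩, hconv, hlsc⟩ := hf
  lift f x to ℝ using ⟨hx, hbot x⟩ with m hm
  obtain ⟨g, s, u, hsep, hxu⟩ :=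
    exists_separation_epiFn hconv hlsc (z := x) (r := m - 1) (by rw [← hm]; norm_cast; linarith)
  have hs : s < 0 := by nlinarith [hsep x m hm.ge]
  exact ⟨_, smul_mem_domFn_conjFn_of_separation hs hsep⟩

lemma InGamma.apply_add_smul_le {f : X → EReal} (hf : InGamma f) {d : X}
    (hd : ∀ q ∈ domFn (conjFn f), q d ≤ 0) {x : X} {r : ℝ} (hx : f x ≤ r) {t : ℝ} (ht : 0 ≤ t) :
    f (x + t • d) ≤ r := by
  by_contra hz
  obtain ⟨g, s, u, hsep, hzu⟩ := exists_separation_epiFn hf.2.2.1 hf.2.2.2 hz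
  have hxu : g x + r * s < u := hsep x r hx
  have hgd : 0 < g d := by
    have : g (x + t • d) = g x + t * g d := by rw [map_add, map_smul, smul_eq_mul]
    nlinarith
  have hs : s ≤ 0 := by
    by_contra! hs
    obtain ⟨ρ, hρ, hρu⟩ := exists_nonneg_pos_add_mul (g x + r * s - u) hs
    have := hsep x (r + ρ) (hx.trans (EReal.coe_le_coe_iff.2 (by linarith)))
    linarith
  rcases hs.lt_or_eq with hs | rfl
  · have := hd _ (smul_mem_domFn_conjFn_of_separation hs hsep)
    change (-s)⁻¹ * g d ≤ 0 at this
    nlinarith [inv_pos.2 (neg_pos.2 hs)]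
  · obtain ⟨q₀, hq₀⟩ := hf.nonempty_domFn_conjFn
    obtain ⟨M, hM⟩ := mem_domFn_conjFn_iff.1 hq₀
    have htilt : ∀ c : ℝ, 0 ≤ c → q₀ + c • g ∈ domFn (conjFn f) := fun c hc =>
      mem_domFn_conjFn_iff.2 ⟨M + c * u, fun y ρ hyρ => by
        change q₀ y + c * g y - ρ ≤ _
        nlinarith [hM y ρ hyρ, hsep y ρ hyρ]⟩
    obtain ⟨c, hc, hpos⟩ := exists_nonneg_pos_add_mul (q₀ d) hgd
    have := hd _ (htilt c hc)
    change q₀ d + c * g d ≤ 0 at this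
    linarith

end Conjugate

theorem stmt1_general [IsTopologicalAddGroup X] [ContinuousSMul ℝ X] [LocallyConvexSpace ℝ X] {I : Type*} (f : I → X → EReal)
    (hf : ∀ i, InGamma (f i))
    (hB : {x : X | ∀ i, f i x ≤ (0 : EReal)}.Nonempty) :
    closure (barCone {x : X | ∀ i, f i x ≤ (0 : EReal)}) =
      closure (coneGen (⋃ i, domFn (conjFn (f i)))) := by
  set B := {x : X | ∀ i, f i x ≤ (0 : EReal)}
  set K := PointedCone.hull ℝ (⋃ i, domFn (conjFn (f i)))
  rw [coneGen_eq_hull]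
  refine Subset.antisymm (closure_minimal (fun p hp => ?_) isClosed_closure) (closure_mono ?_)
  · by_contra hpK
    obtain ⟨d, hdK, hpd⟩ := WeakDual.exists_eval_pos_of_notMem (Submodule.closure K) hpK
    obtain ⟨x₀, hx₀⟩ := hB
    have hray : ∀ t : ℝ, 0 ≤ t → x₀ + t • d ∈ B := fun t ht i =>
      (hf i).apply_add_smul_le
        (fun q hq => hdK q (subset_closure (PointedCone.subset_hull (mem_iUnion_of_mem i hq))))
        (hx₀ i) ht
    obtain ⟨M, hM⟩ := mem_barCone_iff.1 hp
    obtain ⟨t, ht, hMt⟩ := exists_nonneg_pos_add_mul (p x₀ - M) hpd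
    have := hM _ (hray t ht)
    rw [map_add, map_smul, smul_eq_mul] at this
    linarith
  · have hKB : K ≤ barrierCone X B :=
      Submodule.span_le.2 (iUnion_subset fun i => domFn_conjFn_subset_barCone fun x hx => hx i)
    exact hKB

/-- Lemma 1(ii): `w*-cl (barr B) = w*-cl cone (⋃ i, dom f_i*)` whenever `B ≠ ∅`. -/
theorem stmt1 [IsTopologicalAddGroup X] [ContinuousSMul ℝ X] [LocallyConvexSpace ℝ X] [T2Space X] {I : Type*} (f : I → X → EReal)
    (hf : ∀ i, InGamma (f i))
    (hB : {x : X | ∀ i, f i x ≤ (0 : EReal)}.Nonempty) :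
    closure (barCone {x : X | ∀ i, f i x ≤ (0 : EReal)}) =
      closure (coneGen (⋃ i, domFn (conjFn (f i)))) :=
  stmt1_general f hf hB
end
end

section
/- Assume A ≠ ∅. Then the weak*-closure of the characteristic cone K of σ equals the epigraph of the conjugate of the indicator of A, i.e. w*-cl K = epi δ_A*. -/
/-
By Fenchel–Moreau, a function `g ∈ Γ(X)` satisfies `g y ≤ 0` exactly when `q y ≤ t` for every
`(q, t) ∈ epi g*`; hence `A` is the solution set of the linear system `{q y ≤ t : (q, t) ∈ K}`,
and `epi δ_A*` is the set of its consequences `{(p, r) : p ≤ r on A}`, a weak*-closed convex cone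
containing `K`. Conversely, a point `(p, r)` of `epi δ_A*` outside `w*-cl K` is strictly separated
from the cone by a functional `(q, t) ↦ q x + t s` that is `≤ 0` on `K`, with `s ≤ 0` because
`(0, 1) ∈ K`, and `p x + r s > 0`. For `a ∈ A` the points `(1 - μ s)⁻¹ (a + μ x)`, `μ ≥ 0`, all
satisfy the system, so `p a + μ (p x + r s) ≤ r` for every `μ ≥ 0`, which is absurd.
-/

open Pointwise

noncomputable section

variable {X : Type*} [AddCommGroup X] [Module ℝ X] [TopologicalSpace X]

-- `WeakDual` is a type synonym of `WeakBilin`, whose instance is not found through it.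
instance inst_s2 : LocallyConvexSpace ℝ (WeakDual ℝ X) := WeakBilin.locallyConvexSpace

section ConeGen

variable {V : Type*} [AddCommGroup V] [Module ℝ V]

lemma zero_mem_coneGen (D : Set V) : (0 : V) ∈ coneGen D := Or.inl rfl

lemma subset_coneGen (D : Set V) : D ⊆ coneGen D := fun x hx =>
  Or.inr ⟨1, zero_le_one, x, subset_convexHull ℝ D hx, (one_smul ℝ x).symm⟩

lemma smul_mem_coneGen {D : Set V} {t : ℝ} (ht : 0 ≤ t) {z : V} (hz : z ∈ coneGen D) :
    t • z ∈ coneGen D := by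
  rcases hz with rfl | ⟨s, hs, x, hx, rfl⟩
  · rw [smul_zero]; exact zero_mem_coneGen D
  · exact Or.inr ⟨t * s, mul_nonneg ht hs, x, hx, (mul_smul t s x).symm⟩

lemma convex_coneGen (D : Set V) : Convex ℝ (coneGen D) := by
  rintro _ (rfl | ⟨t₁, ht₁, x₁, hx₁, rfl⟩) z₂ h₂ a b ha hb -
  · rw [smul_zero, zero_add]; exact smul_mem_coneGen hb h₂
  rcases h₂ with rfl | ⟨t₂, ht₂, x₂, hx₂, rfl⟩
  · rw [smul_zero, add_zero]; exact smul_mem_coneGen ha (Or.inr ⟨t₁, ht₁, x₁, hx₁, rfl⟩)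
  rw [smul_smul, smul_smul]
  set c := a * t₁ + b * t₂
  have hat₁ : 0 ≤ a * t₁ := mul_nonneg ha ht₁
  have hbt₂ : 0 ≤ b * t₂ := mul_nonneg hb ht₂
  rcases (add_nonneg hat₁ hbt₂).eq_or_lt with hc | hc
  · rw [show a * t₁ = 0 by linarith, show b * t₂ = 0 by linarith, zero_smul, zero_smul, add_zero]
    exact zero_mem_coneGen D
  · refine Or.inr ⟨c, hc.le, (a * t₁ / c) • x₁ + (b * t₂ / c) • x₂, ?_, ?_⟩
    · exact convex_convexHull ℝ D hx₁ hx₂ (div_nonneg hat₁ hc.le) (div_nonneg hbt₂ hc.le)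
        (by rw [← add_div, div_self hc.ne'])
    · rw [smul_add, smul_smul, smul_smul, mul_div_cancel₀ _ hc.ne', mul_div_cancel₀ _ hc.ne']

lemma coneGen_subset {D S : Set V} (hDS : D ⊆ S) (hS : Convex ℝ S) (h0 : (0 : V) ∈ S)
    (hsmul : ∀ t : ℝ, 0 ≤ t → ∀ z ∈ S, t • z ∈ S) : coneGen D ⊆ S := by
  rintro _ (rfl | ⟨t, ht, x, hx, rfl⟩)
  · exact h0
  · exact hsmul t ht x (convexHull_min hDS hS hx)

end ConeGen

section LinearFunctional

variable {V : Type*} [AddCommGroup V] [Module ℝ V]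

lemma le_zero_of_forall_lt_of_smul_mem {F : Type*} [FunLike F V ℝ] [LinearMapClass F ℝ V ℝ]
    {S : Set V} (hS : ∀ t : ℝ, 0 ≤ t → ∀ z ∈ S, t • z ∈ S) (φ : F) {β : ℝ} (hφ : ∀ z ∈ S, φ z < β)
    {z : V} (hz : z ∈ S) : φ z ≤ 0 := by
  by_contra! hpos
  have := hφ _ (hS ((|β| + 1) / φ z) (by positivity) z hz)
  rw [map_smul, smul_eq_mul, div_mul_cancel₀ _ hpos.ne'] at this
  linarith [le_abs_self β]

lemma map_prod_eq {F : Type*} [FunLike F (V × ℝ) ℝ] [LinearMapClass F ℝ (V × ℝ) ℝ] (φ : F)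
    (z : V) (u : ℝ) : φ (z, u) = φ (z, 0) + u * φ (0, 1) := by
  rw [← smul_eq_mul, ← map_smul, ← map_add, Prod.smul_mk, smul_zero, smul_eq_mul, mul_one,
    Prod.mk_add_mk, add_zero, zero_add]

end LinearFunctional

section Conjugate

lemma conjFn_le_iff {h : X → EReal} {p : WeakDual ℝ X} {e : EReal} :
    conjFn h p ≤ e ↔ ∀ x, (p x : EReal) - h x ≤ e := iSup_le_iff

lemma epiFn_conjFn_indicatorE (D : Set X) :
    epiFn (conjFn (indicatorE D)) = {w | ∀ x ∈ D, w.1 x ≤ w.2} := by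
  ext ⟨p, r⟩
  simp only [epiFn, Set.mem_ofPred_eq, conjFn_le_iff, indicatorE]
  refine ⟨fun h x hx => ?_, fun h x => ?_⟩
  · simpa [hx] using h x
  · by_cases hx : x ∈ D <;> simp [hx, h x]

lemma apply_le_of_mem_epiFn_conjFn {g : X → EReal} {y : X} (hy : g y ≤ 0) {w : WeakDual ℝ X × ℝ}
    (hw : w ∈ epiFn (conjFn g)) : w.1 y ≤ w.2 := by
  have h := EReal.sub_le_sub (le_refl (w.1 y : EReal)) hy |>.trans (conjFn_le_iff.1 hw y)
  rw [sub_zero] at h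
  exact_mod_cast h

lemma indicatorE_le_zero_iff {V : Type*} {D : Set V} {y : V} : indicatorE D y ≤ 0 ↔ y ∈ D := by
  by_cases hy : y ∈ D <;> simp [indicatorE, hy]

end Conjugate

namespace InGamma

variable {g : X → EReal}

lemma isClosed_epiFn (hg : InGamma g) : IsClosed (epiFn g) :=
  hg.2.2.2.isClosed_epigraph.preimage
    (continuous_fst.prodMk (continuous_coe_real_ereal.comp continuous_snd))

lemma convex_epiFn (hg : InGamma g) : Convex ℝ (epiFn g) := hg.2.2.1

lemma exists_eq_coe (hg : InGamma g) : ∃ z : X, ∃ r : ℝ, g z = r := by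
  obtain ⟨z, hz⟩ := hg.2.1
  exact ⟨z, (g z).toReal, (EReal.coe_toReal hz (hg.1 z)).symm⟩

end InGamma

lemma inGamma_indicatorE {C : Set X} (hne : C.Nonempty) (hcl : IsClosed C) (hcv : Convex ℝ C) :
    InGamma (indicatorE C) := by
  have hepi : epiFn (indicatorE C) = C ×ˢ Set.Ici 0 := by
    ext ⟨z, u⟩
    by_cases hz : z ∈ C <;> simp [epiFn, indicatorE, hz]
  have hind : indicatorE C = Cᶜ.indicator fun _ => ⊤ := by
    ext z
    by_cases hz : z ∈ C <;> simp [indicatorE, hz]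
  obtain ⟨c, hc⟩ := hne
  refine ⟨fun z => ?_, ⟨c, by simp [indicatorE, hc]⟩, ?_, ?_⟩
  · by_cases hz : z ∈ C <;> simp [indicatorE, hz]
  · change Convex ℝ (epiFn _)
    exact hepi ▸ hcv.prod (convex_Ici 0)
  · exact hind ▸ hcl.isOpen_compl.lowerSemicontinuous_indicator le_top

def linearSolSet (D : Set (WeakDual ℝ X × ℝ)) : Set X :=
  {y | ∀ w ∈ D, w.1 y ≤ w.2}

lemma linearSolSet_union (D D' : Set (WeakDual ℝ X × ℝ)) :
    linearSolSet (D ∪ D') = linearSolSet D ∩ linearSolSet D' := by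
  ext y
  simp only [linearSolSet, Set.mem_ofPred_eq, Set.mem_inter_iff, Set.mem_union, or_imp, forall_and]

lemma linearSolSet_iUnion {ι : Type*} (D : ι → Set (WeakDual ℝ X × ℝ)) :
    linearSolSet (⋃ i, D i) = ⋂ i, linearSolSet (D i) := by
  ext y
  simp only [linearSolSet, Set.mem_ofPred_eq, Set.mem_iInter, Set.mem_iUnion, forall_exists_index]
  exact forall_comm

def EpiInHalfspace (g : X → EReal) (q : WeakDual ℝ X) (s β : ℝ) : Prop :=
  ∀ (z : X) (u : ℝ), g z ≤ u → β < q z + u * s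

namespace EpiInHalfspace

variable {g : X → EReal} {q : WeakDual ℝ X} {s β : ℝ}

lemma nonneg {z₀ : X} {r₀ : ℝ} (hz₀ : g z₀ = r₀) (h : EpiInHalfspace g q s β) : 0 ≤ s := by
  by_contra! hs
  have h₁ := h z₀ (max r₀ ((β - q z₀) / s)) (hz₀ ▸ EReal.coe_le_coe_iff.2 (le_max_left _ _))
  have h₂ := mul_le_mul_of_nonpos_right (le_max_right r₀ ((β - q z₀) / s)) hs.le
  rw [div_mul_cancel₀ _ hs.ne] at h₂
  linarith

lemma add_smul {q' : WeakDual ℝ X} {s' β' μ : ℝ} (h : EpiInHalfspace g q s β)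
    (h' : EpiInHalfspace g q' s' β') (hμ : 0 ≤ μ) :
    EpiInHalfspace g (q + μ • q') (s + μ * s') (β + μ * β') := by
  intro z u hz
  have h₁ := h z u hz
  have h₂ := mul_le_mul_of_nonneg_left (h' z u hz).le hμ
  change β + μ * β' < q z + μ * q' z + u * (s + μ * s')
  linarith

lemma conjFn_le (hbot : ∀ z, g z ≠ ⊥) (h : EpiInHalfspace g q s β) (hs : 0 < s) :
    conjFn g (-s⁻¹ • q) ≤ ((-β / s : ℝ) : EReal) := by
  refine conjFn_le_iff.2 fun z => ?_
  induction hgz : g z using EReal.rec with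
  | bot => exact absurd hgz (hbot z)
  | top => simp
  | coe r =>
    have h₁ := h z r hgz.le
    have h₂ : (-s⁻¹ • q) z = -(q z / s) := by
      change -s⁻¹ * q z = _
      ring
    rw [← EReal.coe_sub, EReal.coe_le_coe_iff, h₂, neg_div, neg_sub_left, neg_le_neg_iff,
      div_le_iff₀ hs, add_mul, div_mul_cancel₀ _ hs.ne']
    linarith

lemma le_apply (hbot : ∀ z, g z ≠ ⊥) (h : EpiInHalfspace g q s β) (hs : 0 < s) {y : X}
    (hy : ∀ w ∈ epiFn (conjFn g), w.1 y ≤ w.2) : β ≤ q y := by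
  have h₁ : -(q y / s) ≤ -β / s := by
    have := hy (-s⁻¹ • q, -β / s) (h.conjFn_le hbot hs)
    change -s⁻¹ * q y ≤ -β / s at this
    rwa [neg_mul, inv_mul_eq_div] at this
  rwa [neg_div, neg_le_neg_iff, div_le_div_iff_of_pos_right hs] at h₁

end EpiInHalfspace

section Separation

variable [IsTopologicalAddGroup X] [ContinuousSMul ℝ X] [LocallyConvexSpace ℝ X]

lemma exists_epiInHalfspace_of_notMem {g : X → EReal} (hcl : IsClosed (epiFn g))
    (hcv : Convex ℝ (epiFn g)) {z : X} {u : ℝ} (h : (z, u) ∉ epiFn g) :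
    ∃ q s β, q z + u * s < β ∧ EpiInHalfspace g q s β := by
  obtain ⟨φ, β, hlt, hgt⟩ := geometric_hahn_banach_point_closed hcv hcl h
  refine ⟨StrongDual.toWeakDual (φ.comp (.inl ℝ X ℝ)), φ (0, 1), β, ?_, fun z' u' h' => ?_⟩
  · rwa [map_prod_eq] at hlt
  · have := hgt (z', u') h'
    rwa [map_prod_eq] at this

namespace InGamma

variable {g : X → EReal}

lemma exists_epiInHalfspace_pos (hg : InGamma g) :
    ∃ q s β, 0 < s ∧ EpiInHalfspace g q s β := by
  obtain ⟨z, r, hz⟩ := hg.exists_eq_coe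
  have hnot : (z, r - 1) ∉ epiFn g := fun hmem => by
    have : (r : EReal) ≤ (r - 1 : ℝ) := hz ▸ hmem
    linarith [EReal.coe_le_coe_iff.1 this]
  obtain ⟨q, s, β, hlt, h⟩ := exists_epiInHalfspace_of_notMem hg.isClosed_epiFn hg.convex_epiFn hnot
  have := h z r hz.le
  exact ⟨q, s, β, by linarith, h⟩

theorem le_zero_of_forall_mem_epiFn_conjFn (hg : InGamma g) {y : X}
    (hy : ∀ w ∈ epiFn (conjFn g), w.1 y ≤ w.2) : g y ≤ 0 := by
  by_contra hgy
  obtain ⟨q₀, s₀, β₀, hy₀, h₀⟩ := exists_epiInHalfspace_of_notMem (u := 0) hg.isClosed_epiFn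
    hg.convex_epiFn fun h => hgy (by exact_mod_cast h)
  obtain ⟨q₁, s₁, β₁, hs₁, h₁⟩ := hg.exists_epiInHalfspace_pos
  obtain ⟨z, r, hz⟩ := hg.exists_eq_coe
  have hs₀ := h₀.nonneg hz
  -- `y` lies in every non-vertical half-space containing `epi g`, in particular in all of
  -- `h₁ + μ h₀`, whereas the vertical half-space `h₀` excludes it.
  have key : ∀ μ : ℝ, 0 ≤ μ → β₁ + μ * β₀ ≤ q₁ y + μ * q₀ y := fun μ hμ =>
    (h₁.add_smul h₀ hμ).le_apply hg.1 (by positivity) hy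
  rw [zero_mul, add_zero] at hy₀
  have hgap : 0 < β₀ - q₀ y := by linarith
  have := key ((|q₁ y - β₁| + 1) / (β₀ - q₀ y)) (by positivity)
  have hμ : (|q₁ y - β₁| + 1) / (β₀ - q₀ y) * (β₀ - q₀ y) = |q₁ y - β₁| + 1 :=
    div_mul_cancel₀ _ hgap.ne'
  linarith [le_abs_self (q₁ y - β₁)]

theorem le_zero_iff (hg : InGamma g) {y : X} :
    g y ≤ 0 ↔ y ∈ linearSolSet (epiFn (conjFn g)) :=
  ⟨fun hy _ hw => apply_le_of_mem_epiFn_conjFn hy hw, hg.le_zero_of_forall_mem_epiFn_conjFn⟩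

end InGamma

lemma solSet_eq_linearSolSet {I : Type*} {C : Set X} {f : I → X → EReal}
    (hC : InGamma (indicatorE C)) (hf : ∀ i, InGamma (f i)) :
    solSet C f = linearSolSet (epiFn (conjFn (indicatorE C)) ∪ ⋃ i, epiFn (conjFn (f i))) := by
  ext y
  simp only [solSet, Set.mem_ofPred_eq, ← indicatorE_le_zero_iff (D := C), hC.le_zero_iff,
    (hf _).le_zero_iff, linearSolSet_union, linearSolSet_iUnion, Set.mem_inter_iff,
    Set.mem_iInter]

end Separation

lemma smul_add_smul_mem_linearSolSet {D : Set (WeakDual ℝ X × ℝ)} {a x : X} {s μ : ℝ}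
    (ha : a ∈ linearSolSet D) (hs : s ≤ 0) (hx : ∀ w ∈ D, w.1 x + w.2 * s ≤ 0) (hμ : 0 ≤ μ) :
    (1 - μ * s)⁻¹ • (a + μ • x) ∈ linearSolSet D := by
  intro w hw
  have hpos : 0 < 1 - μ * s := by nlinarith
  rw [map_smul, map_add, map_smul, smul_eq_mul, smul_eq_mul, inv_mul_le_iff₀ hpos]
  nlinarith [ha w hw, hx w hw]

lemma add_mul_le_zero_of_forall_mem_linearSolSet {D : Set (WeakDual ℝ X × ℝ)} {a x : X} {s : ℝ}
    (ha : a ∈ linearSolSet D) (hs : s ≤ 0) (hx : ∀ w ∈ D, w.1 x + w.2 * s ≤ 0)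
    {p : WeakDual ℝ X} {r : ℝ} (hpr : ∀ y ∈ linearSolSet D, p y ≤ r) : p x + r * s ≤ 0 := by
  by_contra! hpos
  set μ := (r - p a + 1) / (p x + r * s)
  have hμ : 0 ≤ μ := div_nonneg (by linarith [hpr a ha]) hpos.le
  have h := hpr _ (smul_add_smul_mem_linearSolSet ha hs hx hμ)
  have h1 : 0 < 1 - μ * s := by nlinarith
  rw [map_smul, map_add, map_smul, smul_eq_mul, smul_eq_mul, inv_mul_le_iff₀ h1] at h
  have : μ * (p x + r * s) = r - p a + 1 := div_mul_cancel₀ _ hpos.ne'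
  nlinarith

lemma isClosed_setOf_forall_apply_le (A : Set X) :
    IsClosed {w : WeakDual ℝ X × ℝ | ∀ y ∈ A, w.1 y ≤ w.2} := by
  simp only [Set.ofPred_forall]
  exact isClosed_biInter fun y _ =>
    isClosed_le ((WeakDual.eval_continuous y).comp continuous_fst) continuous_snd

lemma convex_setOf_forall_apply_le (A : Set X) :
    Convex ℝ {w : WeakDual ℝ X × ℝ | ∀ y ∈ A, w.1 y ≤ w.2} := by
  rintro w hw w' hw' a b ha hb - y hy
  change a * w.1 y + b * w'.1 y ≤ a * w.2 + b * w'.2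
  nlinarith [hw y hy, hw' y hy]

theorem closure_coneGen_eq {D : Set (WeakDual ℝ X × ℝ)} (h01 : ((0 : WeakDual ℝ X), (1 : ℝ)) ∈ D)
    (hD : (linearSolSet D).Nonempty) :
    closure (coneGen D) = {w | ∀ y ∈ linearSolSet D, w.1 y ≤ w.2} := by
  refine subset_antisymm (closure_minimal ?_ (isClosed_setOf_forall_apply_le _)) fun w hw => ?_
  · refine coneGen_subset (fun w hw y hy => hy w hw) (convex_setOf_forall_apply_le _)
      (fun _ _ => le_rfl) fun t ht w hw y hy => ?_
    change t * w.1 y ≤ t * w.2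
    exact mul_le_mul_of_nonneg_left (hw y hy) ht
  by_contra hwK
  obtain ⟨φ, β, hK, hβw⟩ :=
    geometric_hahn_banach_closed_point (convex_coneGen D).closure isClosed_closure hwK
  obtain ⟨x, hx⟩ :=
    LinearMap.dualEmbedding_surjective (topDualPairing ℝ X) (φ.comp (.inl ℝ _ ℝ))
  have hφ (v : WeakDual ℝ X × ℝ) : φ v = v.1 x + v.2 * φ (0, 1) := by
    rw [map_prod_eq]
    exact congrArg (· + _) (DFunLike.congr_fun hx.symm v.1)
  have hcone (v) (hv : v ∈ coneGen D) : φ v ≤ 0 :=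
    le_zero_of_forall_lt_of_smul_mem (fun _ ht _ => smul_mem_coneGen ht) φ
      (fun _ hz => hK _ (subset_closure hz)) hv
  have hβ : 0 < β := by simpa using hK 0 (subset_closure (zero_mem_coneGen D))
  obtain ⟨a, ha⟩ := hD
  have := add_mul_le_zero_of_forall_mem_linearSolSet ha (hcone _ (subset_coneGen D h01))
    (fun v hv => hφ v ▸ hcone v (subset_coneGen D hv)) hw
  linarith [hφ w]

theorem stmt2_general [IsTopologicalAddGroup X] [ContinuousSMul ℝ X] [LocallyConvexSpace ℝ X] {I : Type*} (C : Set X) (hCcl : IsClosed C) (hCcv : Convex ℝ C)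
    (f : I → X → EReal) (hf : ∀ i, InGamma (f i))
    (hA : (solSet C f).Nonempty) :
    closure (charCone C f) = epiFn (conjFn (indicatorE (solSet C f))) := by
  have hsol := solSet_eq_linearSolSet
    (inGamma_indicatorE (hA.mono fun _ hx => hx.1) hCcl hCcv) hf
  have h01 : ((0 : WeakDual ℝ X), (1 : ℝ)) ∈ epiFn (conjFn (indicatorE C)) := by
    rw [epiFn_conjFn_indicatorE]
    exact fun _ _ => zero_le_one
  rw [epiFn_conjFn_indicatorE, hsol]
  exact closure_coneGen_eq (Or.inl h01) (hsol ▸ hA)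

/-- Lemma 2: `w*-cl K = epi δ_A*` whenever `A ≠ ∅`. -/
theorem stmt2 [IsTopologicalAddGroup X] [ContinuousSMul ℝ X] [LocallyConvexSpace ℝ X] [T2Space X] {I : Type*} (C : Set X) (hCne : C.Nonempty) (hCcl : IsClosed C) (hCcv : Convex ℝ C)
    (f : I → X → EReal) (hf : ∀ i, InGamma (f i))
    (hA : (solSet C f).Nonempty) :
    closure (charCone C f) = epiFn (conjFn (indicatorE (solSet C f))) :=
  stmt2_general C hCcl hCcv f hf hA
end
end
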